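/- For every nonnegative integer n and every x ≠ 0, Rubin's q-differential operator applied to the higher-order q-Genocchi polynomial splits into even and odd parts as ∂_q G_{n,q}^{(α)}(x) = Σ_{l=1}^{⌊n/2⌋} binom(n,2l)_q · q^{-2l} [2l]_q · x^{2l-1} · G_{n-2l,q}^{(α)} + Σ_{l=0}^{⌊(n-1)/2⌋} binom(n,2l+1)_q · [2l+1]_q · x^{2l} · G_{n-1-2l,q}^{(α)}, where ⌊·⌋ denotes the integer part and G_{n,q}^{(α)} = G_{n,q}^{(α)}(0). -/

import Mathlib

/-!
The generating function of `G_{n,q}^{(α)}(x)` is that of the numbers `G_{n,q}^{(α)}` times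
`e_q(zx)`, so comparing coefficients gives the `q`-Appell expansion
`G_{n,q}^{(α)}(x) = ∑_k binom(n,k)_q G_{n-k,q}^{(α)} x^k`. Rubin's operator is linear and sends
`x^k` to `q^{-k} [k]_q x^{k-1}` for even `k` and to `[k]_q x^{k-1}` for odd `k`; splitting the
expansion by the parity of `k` gives the two sums.
-/

open PowerSeries Finset

/-- The `q`-number `[n]_q = (1 - q^n)/(1 - q)`. -/
noncomputable def qNum (q : ℂ) (n : ℕ) : ℂ := (1 - q ^ n) / (1 - q)

/-- The `q`-factorial `[n]_q! = [n]_q [n-1]_q ⋯ [1]_q`, with `[0]_q! = 1`. -/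
noncomputable def qFact (q : ℂ) : ℕ → ℂ
  | 0 => 1
  | n + 1 => qNum q (n + 1) * qFact q n

/-- The Gaussian `q`-binomial coefficient `[n]_q! / ([k]_q! [n-k]_q!)`. -/
noncomputable def qBinom (q : ℂ) (n k : ℕ) : ℂ :=
  qFact q n / (qFact q k * qFact q (n - k))

/-- `e_q(zx)` as a formal power series in `z`: `∑ x^l z^l / [l]_q!`. -/
noncomputable def qExpGF (q x : ℂ) : PowerSeries ℂ :=
  PowerSeries.mk fun l => x ^ l / qFact q l

/-- The generating function `([2]_q z / (e_q(z)+1))^α e_q(zx)` of the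
higher-order `q`-Genocchi polynomials, as a formal power series in `z`. -/
noncomputable def qGenocchiGF (q : ℂ) (α : ℕ) (x : ℂ) : PowerSeries ℂ :=
  (PowerSeries.C (qNum q 2) * PowerSeries.X * (qExpGF q 1 + 1)⁻¹) ^ α * qExpGF q x

theorem Finset.sum_range_eq_sum_even_add_sum_odd {M : Type*} [AddCommMonoid M] (f : ℕ → M)
    (n : ℕ) :
    ∑ k ∈ range n, f k =
      ∑ l ∈ range ((n + 1) / 2), f (2 * l) + ∑ l ∈ range (n / 2), f (2 * l + 1) := by
  induction n with
  | zero => simp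
  | succ n ih =>
    obtain ⟨m, rfl | rfl⟩ := Nat.even_or_odd' n
    · rw [show (2 * m + 1) / 2 = m by omega, show 2 * m / 2 = m by omega] at ih
      rw [show (2 * m + 1 + 1) / 2 = m + 1 by omega, show (2 * m + 1) / 2 = m by omega,
        sum_range_succ, sum_range_succ, ih]
      abel
    · rw [show (2 * m + 1 + 1) / 2 = m + 1 by omega, show (2 * m + 1) / 2 = m by omega] at ih
      rw [show (2 * m + 1 + 1 + 1) / 2 = m + 1 by omega, show (2 * m + 1 + 1) / 2 = m + 1 by omega,
        sum_range_succ, ih, sum_range_succ (fun l => f (2 * l + 1))]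
      abel

lemma one_sub_ne_zero_of_norm_lt_one {q : ℂ} (hq1 : ‖q‖ < 1) : 1 - q ≠ 0 :=
  sub_ne_zero.mpr fun h => by simp [← h] at hq1

lemma qNum_ne_zero {q : ℂ} (hq1 : ‖q‖ < 1) {n : ℕ} (hn : n ≠ 0) : qNum q n ≠ 0 := by
  have hqn : ‖q ^ n‖ < 1 := by
    rw [norm_pow]
    exact pow_lt_one₀ (norm_nonneg q) hq1 hn
  exact div_ne_zero (one_sub_ne_zero_of_norm_lt_one hqn) (one_sub_ne_zero_of_norm_lt_one hq1)

lemma qFact_ne_zero {q : ℂ} (hq1 : ‖q‖ < 1) (n : ℕ) : qFact q n ≠ 0 := by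
  induction n with
  | zero => simp [qFact]
  | succ n ih => exact mul_ne_zero (qNum_ne_zero hq1 n.succ_ne_zero) ih

lemma qExpGF_zero (q : ℂ) : qExpGF q 0 = 1 := by
  ext m
  cases m <;> simp [qExpGF, qFact]

lemma eq_sum_qBinom_of_mk_eq_mul_qExpGF {q : ℂ} (hq1 : ‖q‖ < 1) {a b : ℕ → ℂ} {x : ℂ}
    (h : mk (fun n => b n / qFact q n) = mk (fun n => a n / qFact q n) * qExpGF q x) (n : ℕ) :
    b n = ∑ k ∈ range (n + 1), qBinom q n k * a (n - k) * x ^ k := by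
  have hcoeff := congrArg (coeff n) h
  rw [mul_comm, coeff_mk, coeff_mul, Nat.sum_antidiagonal_eq_sum_range_succ_mk] at hcoeff
  simp only [coeff_mk, qExpGF] at hcoeff
  rw [(div_eq_iff (qFact_ne_zero hq1 n)).mp hcoeff, sum_mul]
  refine sum_congr rfl fun k _ => ?_
  have := qFact_ne_zero hq1 k
  have := qFact_ne_zero hq1 (n - k)
  rw [qBinom]
  field_simp

lemma qGenocchi_eq_sum_qBinom {q : ℂ} (hq1 : ‖q‖ < 1) {α : ℕ} {G : ℕ → ℂ → ℂ}
    (hG : ∀ x : ℂ, mk (fun n => G n x / qFact q n) = qGenocchiGF q α x) (n : ℕ) (x : ℂ) :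
    G n x = ∑ k ∈ range (n + 1), qBinom q n k * G (n - k) 0 * x ^ k := by
  have hshift :
      mk (fun n => G n x / qFact q n) = mk (fun n => G n 0 / qFact q n) * qExpGF q x := by
    rw [hG x, hG 0, qGenocchiGF, qGenocchiGF, qExpGF_zero, mul_one]
  exact eq_sum_qBinom_of_mk_eq_mul_qExpGF hq1 hshift n

noncomputable def rubinQDeriv (q : ℂ) (f : ℂ → ℂ) (x : ℂ) : ℂ :=
  (f (q⁻¹ * x) + f (-(q⁻¹ * x)) - f (q * x) + f (-(q * x)) - 2 * f (-x)) / (2 * (1 - q) * x)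

lemma rubinQDeriv_sum_mul_pow (q : ℂ) (s : Finset ℕ) (c : ℕ → ℂ) (x : ℂ) :
    rubinQDeriv q (fun y => ∑ k ∈ s, c k * y ^ k) x =
      ∑ k ∈ s, c k * rubinQDeriv q (· ^ k) x := by
  simp only [rubinQDeriv, mul_div_assoc', ← sum_div, ← sum_add_distrib, ← sum_sub_distrib,
    mul_sum]
  congr 1
  refine sum_congr rfl fun k _ => ?_
  ring

lemma rubinQDeriv_eq_of_numerator_eq {q x : ℂ} (hx : x ≠ 0) {f : ℂ → ℂ} {c : ℂ}
    (h : f (q⁻¹ * x) + f (-(q⁻¹ * x)) - f (q * x) + f (-(q * x)) - 2 * f (-x) = 2 * x * c) :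
    rubinQDeriv q f x = c / (1 - q) := by
  rw [rubinQDeriv, h, show 2 * (1 - q) * x = 2 * x * (1 - q) by ring,
    mul_div_mul_left _ _ (mul_ne_zero two_ne_zero hx)]

lemma rubinQDeriv_pow_two_mul {q x : ℂ} (hq : q ≠ 0) (hx : x ≠ 0) (l : ℕ) :
    rubinQDeriv q (· ^ (2 * l)) x = q ^ (-(2 * l : ℤ)) * qNum q (2 * l) * x ^ (2 * l - 1) := by
  obtain _ | l := l
  -- both sides vanish, the right one through `qNum q 0 = 0` whatever the junk `x ^ (0 - 1)` is
  · norm_num [rubinQDeriv, qNum]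
  have hzpow : q ^ (-(2 * (l + 1 : ℕ) : ℤ)) = (q ^ (2 * (l + 1)))⁻¹ := by
    rw [zpow_neg, ← zpow_natCast]
    push_cast
    rfl
  have heven : Even (2 * (l + 1)) := even_two_mul _
  rw [hzpow,
    rubinQDeriv_eq_of_numerator_eq hx (c := ((q ^ (2 * (l + 1)))⁻¹ - 1) * x ^ (2 * l + 1))]
  · rw [qNum, show 2 * (l + 1) - 1 = 2 * l + 1 by omega, ← mul_div_assoc, mul_sub, mul_one,
      inv_mul_cancel₀ (pow_ne_zero _ hq)]
    ring
  · rw [heven.neg_pow, heven.neg_pow, heven.neg_pow]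
    ring

lemma rubinQDeriv_pow_two_mul_add_one {x : ℂ} (q : ℂ) (hx : x ≠ 0) (l : ℕ) :
    rubinQDeriv q (· ^ (2 * l + 1)) x = qNum q (2 * l + 1) * x ^ (2 * l) := by
  have hodd : Odd (2 * l + 1) := odd_two_mul_add_one l
  rw [rubinQDeriv_eq_of_numerator_eq hx (c := (1 - q ^ (2 * l + 1)) * x ^ (2 * l)), qNum,
    div_mul_eq_mul_div]
  rw [hodd.neg_pow, hodd.neg_pow, hodd.neg_pow]
  ring

theorem rubin_qDeriv_qGenocchi_even_odd_general (q : ℂ) (hq0 : 0 < ‖q‖) (hq1 : ‖q‖ < 1)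
    (α : ℕ) (G : ℕ → ℂ → ℂ)
    (hG : ∀ x : ℂ, PowerSeries.mk (fun n => G n x / qFact q n) = qGenocchiGF q α x) :
    ∀ (n : ℕ) (x : ℂ), x ≠ 0 →
      (G n (q⁻¹ * x) + G n (-(q⁻¹ * x)) - G n (q * x) + G n (-(q * x)) - 2 * G n (-x)) /
          (2 * (1 - q) * x) =
        (∑ l ∈ Finset.Icc 1 (n / 2),
            qBinom q n (2 * l) * q ^ (-(2 * l : ℤ)) * qNum q (2 * l) * x ^ (2 * l - 1) *
              G (n - 2 * l) 0) +
          ∑ l ∈ Finset.range ((n + 1) / 2),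
            qBinom q n (2 * l + 1) * qNum q (2 * l + 1) * x ^ (2 * l) *
              G (n - 1 - 2 * l) 0 := by
  intro n x hx
  have hq : q ≠ 0 := norm_pos_iff.mp hq0
  change rubinQDeriv q (G n) x = _
  rw [funext (qGenocchi_eq_sum_qBinom hq1 hG n), rubinQDeriv_sum_mul_pow,
    sum_range_eq_sum_even_add_sum_odd, show (n + 1 + 1) / 2 = n / 2 + 1 by omega]
  congr 1
  · rw [range_eq_Ico, sum_eq_sum_Ico_succ_bot (by positivity), zero_add, Ico_add_one_right_eq_Icc]
    have hconst : rubinQDeriv q (· ^ (2 * 0)) x = 0 := by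
      simpa [qNum] using rubinQDeriv_pow_two_mul hq hx 0
    rw [hconst, mul_zero, zero_add]
    refine sum_congr rfl fun l _ => ?_
    rw [rubinQDeriv_pow_two_mul hq hx]
    ring
  · refine sum_congr rfl fun l _ => ?_
    rw [rubinQDeriv_pow_two_mul_add_one q hx, show n - (2 * l + 1) = n - 1 - 2 * l by omega]
    ring

/-- Rubin's `q`-differential operator applied to the higher-order `q`-Genocchi
polynomial splits into even and odd parts: for `n ≥ 0` and `x ≠ 0`,
`∂_q G_{n,q}^{(α)}(x)
  = ∑_{l=1}^{⌊n/2⌋} binom(n,2l)_q q^{-2l} [2l]_q x^{2l-1} G_{n-2l,q}^{(α)}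
  + ∑_{l=0}^{⌊(n-1)/2⌋} binom(n,2l+1)_q [2l+1]_q x^{2l} G_{n-1-2l,q}^{(α)}`,
where `G_{m,q}^{(α)} = G_{m,q}^{(α)}(0)`.  (The second sum, over
`0 ≤ l ≤ ⌊(n-1)/2⌋`, is indexed by `Finset.range ((n+1)/2)`, which is empty when
`n = 0`, matching the real-floor convention `⌊-1/2⌋ = -1`.) -/
theorem rubin_qDeriv_qGenocchi_even_odd (q : ℂ) (hq0 : 0 < ‖q‖) (hq1 : ‖q‖ < 1)
    (α : ℕ) (hα : 0 < α) (G : ℕ → ℂ → ℂ)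
    (hG : ∀ x : ℂ, PowerSeries.mk (fun n => G n x / qFact q n) = qGenocchiGF q α x) :
    ∀ (n : ℕ) (x : ℂ), x ≠ 0 →
      (G n (q⁻¹ * x) + G n (-(q⁻¹ * x)) - G n (q * x) + G n (-(q * x)) - 2 * G n (-x)) /
          (2 * (1 - q) * x) =
        (∑ l ∈ Finset.Icc 1 (n / 2),
            qBinom q n (2 * l) * q ^ (-(2 * l : ℤ)) * qNum q (2 * l) * x ^ (2 * l - 1) *
              G (n - 2 * l) 0) +
          ∑ l ∈ Finset.range ((n + 1) / 2),
            qBinom q n (2 * l + 1) * qNum q (2 * l + 1) * x ^ (2 * l) *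
              G (n - 1 - 2 * l) 0 :=
  rubin_qDeriv_qGenocchi_even_odd_general q hq0 hq1 α G hG
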